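/- If Z̄ = H X where H = U Σ Vᵀ is a reduced SVD (U with orthonormal columns, Σ diagonal invertible) and W = VᵀX has invertible Gram matrix WWᵀ, then (Z̄ Z̄ᵀ)⁺ = U Σ⁻¹ (W Wᵀ)⁻¹ Σ⁻¹ Uᵀ. -/
import Mathlib


open Matrix

/-- `P` is the Moore–Penrose pseudoinverse of `A` (the four Penrose conditions). -/
def IsMoorePenrose {a b : ℕ} (A : Matrix (Fin a) (Fin b) ℝ)
    (P : Matrix (Fin b) (Fin a) ℝ) : Prop :=
  A * P * A = A ∧ P * A * P = P ∧ (A * P)ᵀ = A * P ∧ (P * A)ᵀ = P * A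

theorem mp_unique {a b : ℕ} {A : Matrix (Fin a) (Fin b) ℝ}
    {P Q : Matrix (Fin b) (Fin a) ℝ}
    (hP : IsMoorePenrose A P) (hQ : IsMoorePenrose A Q) : P = Q := by
  obtain ⟨hP1, hP2, hP3, hP4⟩ := hP
  obtain ⟨hQ1, hQ2, hQ3, hQ4⟩ := hQ
  have hAP : A * P = A * Q := by
    calc A * P = (A * P)ᵀ := hP3.symm
      _ = Pᵀ * Aᵀ := by rw [transpose_mul]
      _ = Pᵀ * (A * Q * A)ᵀ := by rw [hQ1]
      _ = Pᵀ * (Aᵀ * (A * Q)ᵀ) := by rw [transpose_mul]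
      _ = (Pᵀ * Aᵀ) * (A * Q) := by rw [hQ3, Matrix.mul_assoc]
      _ = (A * P)ᵀ * (A * Q) := by rw [transpose_mul]
      _ = (A * P) * (A * Q) := by rw [hP3]
      _ = (A * P * A) * Q := by simp only [Matrix.mul_assoc]
      _ = A * Q := by rw [hP1]
  have hPA : P * A = Q * A := by
    calc P * A = (P * A)ᵀ := hP4.symm
      _ = Aᵀ * Pᵀ := by rw [transpose_mul]
      _ = (A * Q * A)ᵀ * Pᵀ := by rw [hQ1]
      _ = ((Q * A)ᵀ * Aᵀ) * Pᵀ := by rw [show A * Q * A = A * (Q * A) by rw [Matrix.mul_assoc], transpose_mul]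
      _ = (Q * A) * (Aᵀ * Pᵀ) := by rw [hQ4, Matrix.mul_assoc]
      _ = (Q * A) * (P * A)ᵀ := by rw [transpose_mul]
      _ = (Q * A) * (P * A) := by rw [hP4]
      _ = Q * (A * P * A) := by rw [Matrix.mul_assoc, Matrix.mul_assoc]
      _ = Q * A := by rw [hP1]
  calc P = P * A * P := hP2.symm
    _ = Q * A * P := by rw [hPA]
    _ = Q * (A * Q) := by rw [Matrix.mul_assoc, hAP]
    _ = Q * A * Q := by rw [Matrix.mul_assoc]
    _ = Q := hQ2

/-- If Z̄ = HX with reduced SVD H = UΣVᵀ and W = VᵀX has invertible Gram matrix WWᵀ,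
then (Z̄ Z̄ᵀ)⁺ = U Σ⁻¹ (W Wᵀ)⁻¹ Σ⁻¹ Uᵀ. -/
theorem stmt18 {m n r T : ℕ} (H : Matrix (Fin m) (Fin n) ℝ)
    (U : Matrix (Fin m) (Fin r) ℝ) (V : Matrix (Fin n) (Fin r) ℝ) (d : Fin r → ℝ)
    (hd : ∀ i, 0 < d i)
    (hU : Uᵀ * U = 1) (hV : Vᵀ * V = 1)
    (hH : H = U * Matrix.diagonal d * Vᵀ)
    (X : Matrix (Fin n) (Fin T) ℝ)
    (W : Matrix (Fin r) (Fin T) ℝ) (hW : W = Vᵀ * X)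
    [Invertible (W * Wᵀ)]
    (Zbar : Matrix (Fin m) (Fin T) ℝ) (hZ : Zbar = H * X)
    (P : Matrix (Fin m) (Fin m) ℝ) (hP : IsMoorePenrose (Zbar * Zbarᵀ) P) :
    P = U * (Matrix.diagonal d)⁻¹ * (W * Wᵀ)⁻¹ * (Matrix.diagonal d)⁻¹ * Uᵀ := by
  set D := Matrix.diagonal d with hD
  set G := W * Wᵀ with hG
  have hDdet : IsUnit D.det := by
    rw [hD, det_diagonal]
    exact IsUnit.mk0 _ (Finset.prod_ne_zero_iff.2 fun i _ => (hd i).ne')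
  have hDDinv : D * D⁻¹ = 1 := mul_nonsing_inv D hDdet
  have hDinvD : D⁻¹ * D = 1 := nonsing_inv_mul D hDdet
  have hGGinv : G * G⁻¹ = 1 := mul_inv_of_invertible G
  have hGinvG : G⁻¹ * G = 1 := inv_mul_of_invertible G
  -- helper rewrites
  have hUU : ∀ {k : ℕ} (M : Matrix (Fin r) (Fin k) ℝ), Uᵀ * (U * M) = M := by
    intro k M; rw [← Matrix.mul_assoc, hU, Matrix.one_mul]
  have hDl : ∀ {k : ℕ} (M : Matrix (Fin r) (Fin k) ℝ), D * (D⁻¹ * M) = M := by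
    intro k M; rw [← Matrix.mul_assoc, hDDinv, Matrix.one_mul]
  have hDr : ∀ {k : ℕ} (M : Matrix (Fin r) (Fin k) ℝ), D⁻¹ * (D * M) = M := by
    intro k M; rw [← Matrix.mul_assoc, hDinvD, Matrix.one_mul]
  have hGl : ∀ {k : ℕ} (M : Matrix (Fin r) (Fin k) ℝ), G * (G⁻¹ * M) = M := by
    intro k M; rw [← Matrix.mul_assoc, hGGinv, Matrix.one_mul]
  have hGr : ∀ {k : ℕ} (M : Matrix (Fin r) (Fin k) ℝ), G⁻¹ * (G * M) = M := by
    intro k M; rw [← Matrix.mul_assoc, hGinvG, Matrix.one_mul]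
  have hZbar : Zbar = U * (D * W) := by
    rw [hZ, hH, hW]; simp only [Matrix.mul_assoc]
  have hA : Zbar * Zbarᵀ = U * (D * (G * (D * Uᵀ))) := by
    rw [hZbar, transpose_mul, transpose_mul]
    have hDT : Dᵀ = D := by rw [hD, diagonal_transpose]
    rw [hDT, hG]
    simp only [Matrix.mul_assoc]
  set Q := U * D⁻¹ * G⁻¹ * D⁻¹ * Uᵀ with hQdef
  have hAQ : Zbar * Zbarᵀ * Q = U * Uᵀ := by
    rw [hA, hQdef]
    simp only [Matrix.mul_assoc]
    rw [hUU, hDl, hGl, hDl]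
  have hQA : Q * (Zbar * Zbarᵀ) = U * Uᵀ := by
    rw [hA, hQdef]
    simp only [Matrix.mul_assoc]
    rw [hUU, hDr, hGr, hDr]
  have hQmp : IsMoorePenrose (Zbar * Zbarᵀ) Q := by
    refine ⟨?_, ?_, ?_, ?_⟩
    · rw [hAQ, hA]
      simp only [Matrix.mul_assoc]
      rw [hUU]
    · rw [Matrix.mul_assoc, hAQ, hQdef]
      simp only [Matrix.mul_assoc]
      rw [hUU]
    · rw [hAQ, transpose_mul, transpose_transpose]
    · rw [hQA, transpose_mul, transpose_transpose]
  exact mp_unique hP hQmp
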